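/- arXiv:2501.17027 — 2 statements merged into one kernel-verified Lean document; each statement's English description precedes it below -/
import Mathlib

section
/- Let S be a scheme, X an S-scheme, Γ a finite group, and ρ : Γ → Aut_S(X) an action of Γ on X by S-automorphisms. Then the fixed-point functor X^Γ, sending an S-scheme T to the set of S-morphisms f : T → X satisfying ρ(γ) ∘ f = f for all γ ∈ Γ, is representable by an S-scheme X^Γ. Moreover, if X is an affine scheme then the representing scheme X^Γ is affine. -/
/-!
The fixed locus is cut out of `X` one group element at a time: after fixing the elements of a
list `l` by a monomorphism `e : Z ⟶ X`, fixing `γ` as well is the equalizer of `e` and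
`e ≫ ρ γ`, and since `Γ` is finite, finitely many steps reach all of `Γ`. When `X` is affine
it is separated over `S`, so each of these equalizers is a closed immersion, hence an affine
morphism, and affineness propagates down the tower.
-/

open CategoryTheory AlgebraicGeometry Opposite

/-- The fixed-point functor of an action `ρ : Γ →* Aut X` of a group `Γ` on an object `X` of a
category `C`: it sends `T` to the set of morphisms `f : T ⟶ X` fixed by postcomposition with
the action, i.e. `ρ γ ∘ f = f` for all `γ`. -/
def fixedFunctor {C : Type*} [Category C] {Γ : Type*} [Group Γ] {X : C}
    (ρ : Γ →* Aut X) : Cᵒᵖ ⥤ Type _ where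
  obj T := {f : T.unop ⟶ X // ∀ γ : Γ, f ≫ (ρ γ).hom = f}
  map h := TypeCat.ofHom fun f => ⟨h.unop ≫ f.1, fun γ => by rw [Category.assoc, f.2 γ]⟩
  map_id T := by
    ext f
    exact Category.id_comp f.1
  map_comp h h' := by
    ext f
    exact Category.assoc _ _ _

open Limits

section IteratedEqualizer

variable {C : Type*} [Category C] [HasEqualizers C] {X : C} {ι : Type*} (φ : ι → (X ⟶ X))

noncomputable def iteratedEqualizer : List ι → Over X
  | [] => Over.mk (𝟙 X)
  | i :: l =>
    let e := (iteratedEqualizer l).hom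
    Over.mk (equalizer.ι e (e ≫ φ i) ≫ e)

instance mono_iteratedEqualizer_hom (l : List ι) : Mono (iteratedEqualizer φ l).hom := by
  induction l with
  | nil => exact inferInstanceAs (Mono (𝟙 X))
  | cons i l ih => exact inferInstanceAs (Mono (equalizer.ι _ _ ≫ _))

theorem exists_comp_iteratedEqualizer_hom_iff (l : List ι) {T : C} (f : T ⟶ X) :
    (∃ k, k ≫ (iteratedEqualizer φ l).hom = f) ↔ ∀ i ∈ l, f ≫ φ i = f := by
  induction l generalizing T with
  | nil => exact ⟨fun _ => by simp, fun _ => ⟨f, Category.comp_id f⟩⟩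
  | cons i l ih =>
    simp only [iteratedEqualizer, Over.mk_hom, List.forall_mem_cons, ← ih]
    constructor
    · rintro ⟨k, rfl⟩
      refine ⟨?_, k ≫ equalizer.ι _ _, Category.assoc _ _ _⟩
      simp only [Category.assoc, ← equalizer.condition]
    · rintro ⟨hf, k, rfl⟩
      exact ⟨equalizer.lift k (by rw [← Category.assoc, hf]), by simp⟩

end IteratedEqualizer

variable {C : Type*} [Category C] {Γ : Type*} [Group Γ] {X Z : C} in
noncomputable def yonedaObjIsoFixedFunctor (ρ : Γ →* Aut X) (m : Z ⟶ X) [Mono m]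
    (hm : ∀ {T : C} (f : T ⟶ X), (∃ k, k ≫ m = f) ↔ ∀ γ, f ≫ (ρ γ).hom = f) :
    yoneda.obj Z ≅ fixedFunctor ρ :=
  NatIso.ofComponents
    (fun T => Equiv.toIso <| Equiv.ofBijective
      (fun k : T.unop ⟶ Z => (⟨k ≫ m, (hm _).1 ⟨k, rfl⟩⟩ : (fixedFunctor ρ).obj T))
      ⟨fun _ _ h => (cancel_mono m).1 (congrArg Subtype.val h),
        fun f => ((hm f.1).2 f.2).imp fun _ hk => Subtype.ext hk⟩)
    fun h => by
      ext k
      exact Subtype.ext (Category.assoc _ _ _)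

theorem isAffine_equalizer_left {S : Scheme} {X Y : Over S} [IsAffine X.left] [IsAffine Y.left]
    (f g : Y ⟶ X) : IsAffine (equalizer f g).left :=
  isAffine_of_isAffineHom (equalizer.ι f g).left

theorem isAffine_iteratedEqualizer_left {S : Scheme} {X : Over S} [IsAffine X.left] {ι : Type*}
    (φ : ι → (X ⟶ X)) (l : List ι) : IsAffine (iteratedEqualizer φ l).left.left := by
  induction l with
  | nil => exact ‹IsAffine X.left›
  | cons i l ih => exact isAffine_equalizer_left _ _

/-- for a scheme `S`, an `S`-scheme `X`, and an action `ρ` of a finite group `Γ`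
on `X` over `S`, the fixed-point functor `T ↦ {f : T ⟶ X | ∀ γ, ρ γ ∘ f = f}` is representable
by an `S`-scheme `Z`; moreover `Z` (may be chosen to be) affine whenever `X` is affine. -/
theorem fixedFunctor_representable (S : Scheme) (X : Over S)
    (Γ : Type) [Group Γ] [Finite Γ] (ρ : Γ →* Aut X) :
    ∃ Z : Over S, Nonempty (yoneda.obj Z ≅ fixedFunctor ρ) ∧
      (IsAffine X.left → IsAffine Z.left) := by
  have := Fintype.ofFinite Γ
  let Z := iteratedEqualizer (fun γ : Γ => (ρ γ).hom) Finset.univ.toList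
  have hZ {T : Over S} (f : T ⟶ X) : (∃ k, k ≫ Z.hom = f) ↔ ∀ γ, f ≫ (ρ γ).hom = f := by
    simp only [Z, exists_comp_iteratedEqualizer_hom_iff, Finset.mem_toList, Finset.mem_univ,
      true_imp_iff]
  exact ⟨Z.left, ⟨yonedaObjIsoFixedFunctor ρ Z.hom hZ⟩,
    fun _ => isAffine_iteratedEqualizer_left _ _⟩
end

section
/- Let F be a field, Γ a finite group acting on a finite étale F-algebra E by F-algebra automorphisms with invariants E^Γ = F, and let E'/F be a field extension such that E ⊗_F E' ≅ (E')^m as E'-algebras, where m = dim_F E (for instance, E' a sufficiently large finite Galois extension of F). Then the action of Γ on the m-element set of F-algebra homomorphisms E → E', given by precomposition with the inverses of the automorphisms of E, is transitive. -/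
/-!
The splitting `E' ⊗_F E ≅ E'^m` identifies `E' ⊗_F E` with the algebra of all `E'`-valued
functions on `Hom_F(E, E')`, via `a ↦ (h ↦ (id ⊗ h) a)`, and under this identification
`1 ⊗ ρ γ` becomes precomposition with `ρ γ`. So the indicator function of a `Γ`-orbit is a
`Γ`-invariant element of `E' ⊗_F E`. Since `E^Γ = F`, and taking invariants commutes with the
(flat) base change `F → E'`, such an element lies in `E' ⊗ 1`, i.e. the indicator is constant:
the orbit is everything.
-/

open scoped TensorProduct

section SplitAlgebra

variable {K A ι : Type*} [CommSemiring K] [NoZeroDivisors K] [Nontrivial K] [Semiring A]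
  [Algebra K A] [Finite ι]

theorem bijective_evalAlgHom_comp_of_algEquiv_pi (ψ : A ≃ₐ[K] (ι → K)) :
    Function.Bijective fun i => (Pi.evalAlgHom K (fun _ => K) i).comp ψ.toAlgHom := by
  classical
  refine ⟨fun i j hij => ?_, fun φ => ?_⟩
  · by_contra hne
    have := congr($hij (ψ.symm (Pi.single i 1)))
    simp [Ne.symm hne] at this
  · obtain ⟨i, hi⟩ := (φ.comp ψ.symm.toAlgHom).eq_piEvalAlgHom
    refine ⟨i, AlgHom.ext fun a => ?_⟩
    simpa using congr($hi.symm (ψ a))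

theorem bijective_algHom_apply_of_algEquiv_pi (ψ : A ≃ₐ[K] (ι → K)) :
    Function.Bijective fun (a : A) (φ : A →ₐ[K] K) => φ a := by
  let e := Equiv.ofBijective _ (bijective_evalAlgHom_comp_of_algEquiv_pi ψ)
  have : (fun (a : A) (φ : A →ₐ[K] K) => φ a) = e.arrowCongr (Equiv.refl K) ∘ ψ := by
    ext a φ
    obtain ⟨i, rfl⟩ := e.surjective φ
    simp [e, Equiv.arrowCongr_apply]
  rw [this]
  exact (Equiv.bijective _).comp ψ.bijective

end SplitAlgebra

theorem AlgHom.liftEquiv_lTensor {F E E' : Type*} [CommSemiring F] [Semiring E] [Algebra F E]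
    [CommSemiring E'] [Algebra F E'] (h : E →ₐ[F] E') (σ : E →ₐ[F] E) (a : E' ⊗[F] E) :
    AlgHom.liftEquiv F E' E E' h (σ.toLinearMap.lTensor E' a)
      = AlgHom.liftEquiv F E' E E' (h.comp σ) a := by
  induction a using TensorProduct.induction_on with
  | zero => simp
  | tmul y x => simp
  | add a a' ha ha' => simp only [map_add, ha, ha']

theorem bijective_liftEquiv_apply_of_algEquiv_pi {F E E' ι : Type*} [CommSemiring F]
    [Semiring E] [Algebra F E] [Field E'] [Algebra F E'] [Finite ι]
    (ψ : (E' ⊗[F] E) ≃ₐ[E'] (ι → E')) :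
    Function.Bijective fun (a : E' ⊗[F] E) (h : E →ₐ[F] E') => AlgHom.liftEquiv F E' E E' h a :=
  ((AlgHom.liftEquiv F E' E E').arrowCongr (Equiv.refl E')).symm.bijective.comp
    (bijective_algHom_apply_of_algEquiv_pi ψ)

theorem TensorProduct.exists_eq_tmul_one_of_forall_lTensor_eq {F V E ι : Type*} [Field F]
    [AddCommGroup V] [Module F V] [Ring E] [Algebra F E] (σ : ι → E →ₗ[F] E)
    (hσ : ∀ x, (∀ i, σ i x = x) → x ∈ (⊥ : Subalgebra F E))
    {u : V ⊗[F] E} (hu : ∀ i, (σ i).lTensor V u = u) : ∃ v : V, u = v ⊗ₜ 1 := by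
  classical
  let b := Module.Basis.ofVectorSpace F V
  let c := TensorProduct.equivFinsuppOfBasisLeft (N := E) b
  have hc : ∀ i w j, c ((σ i).lTensor V w) j = σ i (c w j) := by
    intro i w j
    induction w using TensorProduct.induction_on with
    | zero => simp
    | tmul v x => simp [c]
    | add w w' hw hw' => simp only [map_add, Finsupp.add_apply, hw, hw']
  have hbot : ∀ j, c u j ∈ (⊥ : Subalgebra F E) := fun j => hσ _ fun i => by rw [← hc, hu]
  choose t ht using fun j => Algebra.mem_bot.mp (hbot j)
  refine ⟨(c u).sum fun j _ => t j • b j, ?_⟩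
  conv_lhs => rw [← c.symm_apply_apply u]
  rw [TensorProduct.equivFinsuppOfBasisLeft_symm_apply, Finsupp.sum, Finsupp.sum,
    TensorProduct.sum_tmul]
  refine Finset.sum_congr rfl fun j _ => ?_
  rw [← ht, Algebra.algebraMap_eq_smul_one, TensorProduct.tmul_smul, TensorProduct.smul_tmul']

theorem mem_of_forall_comp_mem_iff {F E E' ι κ : Type*} [Field F] [Ring E] [Algebra F E]
    [Field E'] [Algebra F E'] [Finite κ] (ψ : (E' ⊗[F] E) ≃ₐ[E'] (κ → E'))
    (σ : ι → E →ₐ[F] E) (hσ : ∀ x, (∀ i, σ i x = x) → x ∈ (⊥ : Subalgebra F E))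
    {S : Set (E →ₐ[F] E')} (hS : ∀ i h, h.comp (σ i) ∈ S ↔ h ∈ S)
    {f g : E →ₐ[F] E'} (hf : f ∈ S) : g ∈ S := by
  classical
  have hbij := bijective_liftEquiv_apply_of_algEquiv_pi ψ
  obtain ⟨a, ha⟩ := hbij.2 (S.indicator 1)
  replace ha : ∀ h, AlgHom.liftEquiv F E' E E' h a = S.indicator 1 h := congrFun ha
  have hfix : ∀ i, (σ i).toLinearMap.lTensor E' a = a := fun i =>
    hbij.1 <| funext fun h => by
      simp only [AlgHom.liftEquiv_lTensor, ha, Set.indicator_apply, Pi.one_apply, hS]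
  obtain ⟨y, rfl⟩ := TensorProduct.exists_eq_tmul_one_of_forall_lTensor_eq _ hσ hfix
  have hconst : ∀ h, S.indicator 1 h = y := fun h => by
    rw [← ha, AlgHom.liftEquiv_tmul, map_one, smul_eq_mul, mul_one]
  by_contra hg
  have h_one_eq_zero := (hconst f).trans (hconst g).symm
  rw [Set.indicator_of_mem hf, Set.indicator_of_notMem hg] at h_one_eq_zero
  exact one_ne_zero h_one_eq_zero

theorem exists_comp_symm_eq_comp_iff {Γ F E E' : Type*} [Group Γ] [CommSemiring F] [Semiring E]
    [Algebra F E] [Semiring E'] [Algebra F E'] (ρ : Γ →* (E ≃ₐ[F] E)) (f : E →ₐ[F] E')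
    (γ : Γ) (h : E →ₐ[F] E') :
    (∃ δ, f.comp (ρ δ).symm.toAlgHom = h.comp (ρ γ).toAlgHom) ↔
      ∃ δ, f.comp (ρ δ).symm.toAlgHom = h := by
  have key : ∀ δ, f.comp (ρ δ).symm.toAlgHom = h.comp (ρ γ).toAlgHom ↔
      f.comp (ρ (γ * δ)).symm.toAlgHom = h := by
    intro δ
    simp only [AlgHom.ext_iff, AlgHom.comp_apply]
    refine (ρ γ).toEquiv.forall_congr fun x => ?_
    have hsymm : (ρ (γ * δ)).symm (ρ γ x) = (ρ δ).symm x := by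
      rw [AlgEquiv.symm_apply_eq]
      simp
    simp only [AlgEquiv.coe_toAlgHom, AlgEquiv.toEquiv_eq_coe, EquivLike.coe_coe, hsymm]
  exact ⟨fun ⟨δ, hδ⟩ => ⟨γ * δ, (key δ).1 hδ⟩,
    fun ⟨δ, hδ⟩ => ⟨γ⁻¹ * δ, (key _).2 (by rwa [mul_inv_cancel_left])⟩⟩

theorem gamma_action_on_algHoms_transitive_general (F E E' : Type) [Field F] [CommRing E] [Algebra F E]
    [Field E'] [Algebra F E']
    (Γ : Type) [Group Γ] (ρ : Γ →* (E ≃ₐ[F] E))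
    (hinv : ∀ x : E, (∀ γ : Γ, ρ γ x = x) ↔ x ∈ (⊥ : Subalgebra F E))
    (hsplit : Nonempty ((E' ⊗[F] E) ≃ₐ[E'] (Fin (Module.finrank F E) → E'))) :
    ∀ f g : E →ₐ[F] E', ∃ γ : Γ, f.comp (ρ γ).symm.toAlgHom = g := by
  obtain ⟨ψ⟩ := hsplit
  intro f g
  have hf : f ∈ {h | ∃ γ, f.comp (ρ γ).symm.toAlgHom = h} := ⟨1, by rw [map_one]; rfl⟩
  exact mem_of_forall_comp_mem_iff ψ (fun γ => (ρ γ).toAlgHom) (fun x hx => (hinv x).1 hx)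
    (exists_comp_symm_eq_comp_iff ρ f) hf

/-- let `Γ` be a finite group acting on a finite étale `F`-algebra `E` by
`F`-algebra automorphisms with invariants `E^Γ = F`, and let `E'/F` be a field extension
splitting `E`, i.e. `E ⊗_F E' ≅ E'^m` as `E'`-algebras where `m = dim_F E`.  Then the action
of `Γ` on the set of `F`-algebra homomorphisms `E → E'`, given by precomposition with the
inverses of the automorphisms, is transitive. -/
theorem gamma_action_on_algHoms_transitive (F E E' : Type) [Field F] [CommRing E] [Algebra F E]
    [Module.Finite F E] [Algebra.Etale F E] [Field E'] [Algebra F E']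
    (Γ : Type) [Group Γ] [Finite Γ] (ρ : Γ →* (E ≃ₐ[F] E))
    (hinv : ∀ x : E, (∀ γ : Γ, ρ γ x = x) ↔ x ∈ (⊥ : Subalgebra F E))
    (hsplit : Nonempty ((E' ⊗[F] E) ≃ₐ[E'] (Fin (Module.finrank F E) → E'))) :
    ∀ f g : E →ₐ[F] E', ∃ γ : Γ, f.comp (ρ γ).symm.toAlgHom = g :=
  gamma_action_on_algHoms_transitive_general F E E' Γ ρ hinv hsplit
end
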